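/- One-step locality estimate, anticommutator version: Let Φ be an even time-dependent interaction on Γ, Λ ⊆ Γ finite, X ⊆ Λ, A ∈ 𝔄_X, B ∈ 𝔄_Λ, and s, t ∈ I with s ≤ t. Then ‖{τ_{t,s}^Λ(A), B}‖ ≤ ‖{τ_{t,s}^X(A), B}‖ + 2‖A‖ ∑_{Z ∈ S_Λ(X)} ∫_s^t ‖[τ_{r,s}^Λ(Φ(Z,r)), B]‖ dr, where τ^X is the Heisenberg dynamics generated by H_X(t) = ∑_{Z ⊆ X} Φ(Z,t). -/

import Mathlib

/-!
Interaction picture. With `C = V(t)* A₀ V(t)`, the path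
`G(r) = U(r)* V(r) C V(r)* U(r)` runs from `G(s) = C` to `G(t) = U(t)* A₀ U(t)`. Split
`H_Λ = H_X + F + R`, where `F` collects the boundary terms `Z ∈ S_Λ(X)` and `R` the terms
disjoint from `X`; being even, `R` commutes with `𝔄_X`, hence with `V` and `C`. This leaves
`G' = i[D, G]` with `D = U* F U`, so `f = {G, B₀}` satisfies
`f' = i[D, f] - i{G, [D, B₀]}`. The commutator part generates an isometric flow, so `‖f‖` grows
at most at rate `‖{G, [D, B₀]}‖ ≤ 2‖A₀‖ ∑_{Z ∈ S_Λ(X)} ‖[U* Φ(Z) U, B₀]‖`.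
-/

open scoped Classical

/-- The canonical anticommutation relations for a family `a x` of annihilation
operators in a C*-algebra. -/
def IsCAR {Γ A : Type*} [Ring A] [StarRing A] (a : Γ → A) : Prop :=
  (∀ x y, a x * a y + a y * a x = 0) ∧
  (∀ x y, star (a x) * star (a y) + star (a y) * star (a x) = 0) ∧
  (∀ x y, a x * star (a y) + star (a y) * a x = if x = y then (1 : A) else 0)

/-- The four possible factors of a monomial at a site `x`:
`1`, `a x`, `a x *`, and `a x * a x`. -/
def carFactor {Γ A : Type*} [Ring A] [StarRing A] (a : Γ → A) (k : Fin 4) (x : Γ) : A :=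
  match k with
  | 0 => 1
  | 1 => a x
  | 2 => star (a x)
  | 3 => star (a x) * a x

/-- The monomial with factor pattern `k` along the enumeration `l` of a finite set of sites. -/
def carMonomial {Γ A : Type*} [Ring A] [StarRing A] (a : Γ → A) (l : List Γ)
    (k : Γ → Fin 4) : A :=
  (l.map fun x => carFactor a (k x) x).prod

/-- The number of odd factors (`a x` or `a x *`) of the monomial with pattern `k` along `l`. -/
def carOddCount {Γ : Type*} (l : List Γ) (k : Γ → Fin 4) : ℕ :=
  l.countP fun x => decide (k x = 1 ∨ k x = 2)

/-- `𝔄_X`: the linear span of the monomials supported in the finite set `X`. -/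
def carSpan {Γ A : Type*} [Ring A] [StarRing A] [Algebra ℂ A] (a : Γ → A) (X : Finset Γ) :
    Submodule ℂ A :=
  Submodule.span ℂ {m | ∃ (l : List Γ) (k : Γ → Fin 4),
    l.Nodup ∧ l.toFinset = X ∧ m = carMonomial a l k}

/-- `𝔄_X⁺`: the linear span of the even monomials supported in the finite set `X`. -/
def carSpanEven {Γ A : Type*} [Ring A] [StarRing A] [Algebra ℂ A] (a : Γ → A) (X : Finset Γ) :
    Submodule ℂ A :=
  Submodule.span ℂ {m | ∃ (l : List Γ) (k : Γ → Fin 4),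
    l.Nodup ∧ l.toFinset = X ∧ Even (carOddCount l k) ∧ m = carMonomial a l k}

theorem Finset.sum_powerset_eq_add_add {Γ M : Type*} [DecidableEq Γ] [AddCommMonoid M]
    {X Λ : Finset Γ} (hXΛ : X ⊆ Λ) (f : Finset Γ → M) :
    ∑ Z ∈ Λ.powerset, f Z = ∑ Z ∈ X.powerset, f Z
      + ∑ Z ∈ Λ.powerset.filter (fun Z => (Z ∩ X).Nonempty ∧ (Z \ X).Nonempty), f Z
      + ∑ Z ∈ Λ.powerset.filter (fun Z => ¬(Z ∩ X).Nonempty ∧ (Z \ X).Nonempty), f Z := by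
  have hX : Λ.powerset.filter (· ⊆ X) = X.powerset := by
    ext Z
    simp only [Finset.mem_filter, Finset.mem_powerset]
    exact ⟨fun h => h.2, fun h => ⟨h.trans hXΛ, h⟩⟩
  have hST : Λ.powerset.filter (fun Z => ¬Z ⊆ X)
      = Λ.powerset.filter (fun Z => (Z ∩ X).Nonempty ∧ (Z \ X).Nonempty)
        ∪ Λ.powerset.filter (fun Z => ¬(Z ∩ X).Nonempty ∧ (Z \ X).Nonempty) := by
    ext Z
    simp only [Finset.mem_filter, Finset.mem_union, Finset.sdiff_nonempty]
    tauto
  rw [← Finset.sum_filter_add_sum_filter_not Λ.powerset (· ⊆ X), hX, hST, add_assoc,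
    Finset.sum_union (Finset.disjoint_filter.mpr fun _ _ h h' => h'.1 h.1)]

section Commute

variable {A : Type*} [Ring A] [StarRing A] {R V Y : A}

theorem Commute.mul_mul_star_of_isSelfAdjoint (hR : IsSelfAdjoint R) (hV : Commute R V)
    (hY : Commute R Y) : Commute R (V * Y * star V) :=
  (hV.mul_right hY).mul_right (by simpa only [hR.star_eq] using hV.star_star)

theorem Commute.star_mul_mul_of_isSelfAdjoint (hR : IsSelfAdjoint R) (hV : Commute R V)
    (hY : Commute R Y) : Commute R (star V * Y * V) := by
  have hV' : Commute R (star V) := by simpa only [hR.star_eq] using hV.star_star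
  simpa only [_root_.star_star] using hV'.mul_mul_star_of_isSelfAdjoint hR hY

end Commute

theorem anticommutator_I_commutator {A : Type*} [Ring A] [Algebra ℂ A] (D G B : A) :
    Complex.I • (D * G - G * D) * B + B * (Complex.I • (D * G - G * D))
      = Complex.I • (D * (G * B + B * G) - (G * B + B * G) * D)
        + -(Complex.I • (G * (D * B - B * D) + (D * B - B * D) * G)) := by
  simp only [smul_mul_assoc, mul_smul_comm, mul_add, add_mul, mul_sub, sub_mul, smul_add,
    smul_sub, mul_assoc]
  abel

theorem norm_anticommutator_le {A : Type*} [NormedRing A] (a b : A) :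
    ‖a * b + b * a‖ ≤ 2 * ‖a‖ * ‖b‖ := by
  linarith [norm_add_le (a * b) (b * a), norm_mul_le a b, norm_mul_le b a, mul_comm ‖a‖ ‖b‖]

namespace IsCAR

section Ring

variable {Γ A : Type*} [Ring A] [StarRing A] {a : Γ → A}

theorem anticomm (hCAR : IsCAR a) (x y : Γ) : a y * a x = -(a x * a y) :=
  eq_neg_of_add_eq_zero_left (hCAR.1 y x)

theorem star_anticomm_star (hCAR : IsCAR a) (x y : Γ) :
    star (a y) * star (a x) = -(star (a x) * star (a y)) :=
  eq_neg_of_add_eq_zero_left (hCAR.2.1 y x)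

theorem anticomm_star (hCAR : IsCAR a) {x y : Γ} (h : y ≠ x) :
    a y * star (a x) = -(star (a x) * a y) :=
  eq_neg_of_add_eq_zero_left (by simpa [h] using hCAR.2.2 y x)

theorem star_anticomm (hCAR : IsCAR a) {x y : Γ} (h : y ≠ x) :
    star (a y) * a x = -(a x * star (a y)) := by
  rw [hCAR.anticomm_star h.symm, neg_neg]

theorem mul_star_add_star_mul (hCAR : IsCAR a) (x : Γ) :
    a x * star (a x) + star (a x) * a x = 1 := by
  simpa using hCAR.2.2 x x

end Ring

theorem mul_self_eq_zero {Γ A : Type*} [Ring A] [StarRing A] [Module ℂ A] {a : Γ → A}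
    (hCAR : IsCAR a) (x : Γ) : a x * a x = 0 := by
  have h : (2 : ℂ) • (a x * a x) = 0 := by rw [two_smul, hCAR.1 x x]
  simpa using h

end IsCAR

section CARCommutation

variable {Γ A : Type*} [Ring A] [StarRing A] {a : Γ → A}

def AnticommutesAt (a : Γ → A) (c : A) (y : Γ) : Prop :=
  a y * c = -(c * a y) ∧ star (a y) * c = -(c * star (a y))

theorem IsCAR.anticommutesAt (hCAR : IsCAR a) {x y : Γ} (h : y ≠ x) :
    AnticommutesAt a (a x) y ∧ AnticommutesAt a (star (a x)) y :=
  ⟨⟨hCAR.anticomm x y, hCAR.star_anticomm h⟩, ⟨hCAR.anticomm_star h, hCAR.star_anticomm_star x y⟩⟩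

theorem carFactor_mul_of_anticommutesAt {c : A} {y : Γ} (h : AnticommutesAt a c y) (k : Fin 4) :
    carFactor a k y * c = (-1 : ℤ) ^ (if k = 1 ∨ k = 2 then 1 else 0) • (c * carFactor a k y) := by
  obtain ⟨h1, h2⟩ := h
  fin_cases k <;> simp [carFactor, h1, h2, mul_assoc]
  simp [← mul_assoc, h2]

theorem carMonomial_mul_of_anticommutesAt {c : A} {l : List Γ}
    (h : ∀ y ∈ l, AnticommutesAt a c y) (k : Γ → Fin 4) :
    carMonomial a l k * c = (-1 : ℤ) ^ carOddCount l k • (c * carMonomial a l k) := by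
  induction l with
  | nil => simp [carMonomial, carOddCount]
  | cons y l ih =>
    simp only [List.forall_mem_cons] at h
    simp only [carMonomial, List.map_cons, List.prod_cons, carOddCount, List.countP_cons] at ih ⊢
    rw [mul_assoc, ih h.2, mul_smul_comm, ← mul_assoc, carFactor_mul_of_anticommutesAt h.1,
      smul_mul_assoc, smul_smul, ← pow_add, mul_assoc]
    congr 2
    split_ifs <;> simp_all

variable [Algebra ℂ A]

theorem commute_of_mem_carSpanEven {c m : A} {Z : Finset Γ} (hm : m ∈ carSpanEven a Z)
    (hc : ∀ y ∈ Z, AnticommutesAt a c y) : Commute m c := by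
  suffices carSpanEven a Z ≤ Subalgebra.toSubmodule (Subalgebra.centralizer ℂ {c}) from
    ((this hm) c rfl).symm
  refine Submodule.span_le.mpr ?_
  rintro _ ⟨l, k, -, rfl, heven, rfl⟩ _ rfl
  rw [carMonomial_mul_of_anticommutesAt (fun y hy => hc y (List.mem_toFinset.mpr hy)),
    heven.neg_one_pow, one_smul]

theorem carSpan_le_toSubmodule (S : Subalgebra ℂ A) {X : Finset Γ}
    (hS : ∀ x ∈ X, a x ∈ S ∧ star (a x) ∈ S) : carSpan a X ≤ Subalgebra.toSubmodule S := by
  refine Submodule.span_le.mpr ?_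
  rintro _ ⟨l, k, -, rfl, rfl⟩
  refine S.list_prod_mem fun m hm => ?_
  obtain ⟨x, hx, rfl⟩ := List.mem_map.mp hm
  obtain ⟨ha, hsa⟩ := hS x (List.mem_toFinset.mpr hx)
  generalize k x = j
  fin_cases j <;> simp [carFactor, ha, hsa, S.one_mem, S.mul_mem hsa ha]

theorem star_mul_mul_eq_self_of_mem_carSpan [IsEmpty Γ] {X : Finset Γ} {W : A}
    (hW : W ∈ unitary A) (hWX : W ∈ carSpan a X) (Y : A) :
    star W * Y * W = Y := by
  obtain ⟨c, rfl⟩ := Algebra.mem_bot.mp (carSpan_le_toSubmodule ⊥ (fun x => isEmptyElim x) hWX)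
  rw [mul_assoc, ← Algebra.commutes, ← mul_assoc, Unitary.star_mul_self_of_mem hW, one_mul]

theorem IsCAR.commute_of_disjoint (hCAR : IsCAR a) {Z X : Finset Γ} (hZX : Disjoint Z X)
    {m y : A} (hm : m ∈ carSpanEven a Z) (hy : y ∈ carSpan a X) : Commute m y := by
  refine carSpan_le_toSubmodule (Subalgebra.centralizer ℂ {m}) (fun x hx => ?_) hy m rfl
  have hne : ∀ z ∈ Z, z ≠ x := fun z hz h => Finset.disjoint_left.mp hZX hz (h ▸ hx)
  constructor <;> rintro _ rfl
  · exact commute_of_mem_carSpanEven hm fun z hz => (hCAR.anticommutesAt (hne z hz)).1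
  · exact commute_of_mem_carSpanEven hm fun z hz => (hCAR.anticommutesAt (hne z hz)).2

end CARCommutation

section ConjugateLinearity

variable {A : Type*} [Ring A] [StarRing A] {b w : A}

theorem mul_star_mul_mul_star_of_mul_self_eq_zero (hbb : b * b = 0)
    (hb : b * star b + star b * b = 1) : b * star b * (b * star b) = b * star b := by
  rw [show b * star b * (b * star b) = b * (star b * b) * star b by simp only [mul_assoc],
    eq_sub_of_add_eq' hb, mul_sub, mul_one, ← mul_assoc, hbb, zero_mul, sub_zero]

theorem eq_zero_of_forall_commute_of_mul_mul_star_eq_zero (hbb : b * b = 0)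
    (hb : b * star b + star b * b = 1) (hw : ∀ z, Commute w z) (hwp : w * (b * star b) = 0) :
    w = 0 := by
  have hq : star b * b * (star b * b) = star b * b := by
    simpa only [star_star, add_comm (star b * b)] using
      mul_star_mul_mul_star_of_mul_self_eq_zero (b := star b)
        (by rw [← star_mul, hbb, star_zero]) (by rwa [star_star, add_comm])
  have hwq : w * (star b * b) = 0 := by
    rw [← hq, show star b * b * (star b * b) = star b * (b * star b) * b by simp only [mul_assoc],
      ← mul_assoc, ← mul_assoc, (hw _).eq, mul_assoc (star b), hwp, mul_zero, zero_mul]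
  rw [← mul_one w, ← hb, mul_add, hwp, hwq, add_zero]

variable [Algebra ℂ A]

theorem commute_star_I_smul_one (z : A) : Commute (star (Complex.I • (1 : A))) z := by
  simpa only [Algebra.algebraMap_eq_smul_one, star_star] using
    (Algebra.commute_algebraMap_left Complex.I (star z)).star_star

theorem star_I_smul_one_mul_self : star (Complex.I • (1 : A)) * star (Complex.I • 1) = -1 := by
  rw [← star_mul, smul_mul_smul_comm, Complex.I_mul_I, one_mul, neg_one_smul, star_neg, star_one]

end ConjugateLinearity

section StarModule

variable {A : Type*} [NormedRing A] [StarRing A] [CStarRing A] [NormedAlgebra ℂ A]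

/-- In a `CStarRing` that is only a normed `ℂ`-algebra, `star` need not be conjugate-linear
(`ℂ` with the trivial involution is an example); a CAR pair `b` forces it. The central
self-adjoint `w = star (I • 1) + I • 1` satisfies `w² (1 + I • star (I • 1)) = 0`, which makes
`x = w (p + I • star b)`, `p = b b*`, isotropic: `x* x = 0`. Hence `w p = p x = 0`, so `w = 0`. -/
theorem star_I_smul_one_of_mul_self_eq_zero {b : A} (hbb : b * b = 0)
    (hb : b * star b + star b * b = 1) :
    star (Complex.I • (1 : A)) = -(Complex.I • (1 : A)) := by
  obtain ⟨i, hi⟩ : ∃ i : A, i = Complex.I • 1 := ⟨_, rfl⟩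
  obtain ⟨J, hJ⟩ : ∃ J : A, J = star i := ⟨_, rfl⟩
  obtain ⟨p, hp⟩ : ∃ p : A, p = b * star b := ⟨_, rfl⟩
  rw [← hi, ← hJ]
  have hic (z : A) : Commute i z := by
    simpa only [hi, Algebra.algebraMap_eq_smul_one] using
      Algebra.commute_algebraMap_left Complex.I z
  have hJc (z : A) : Commute J z := hJ ▸ hi ▸ commute_star_I_smul_one z
  have hw (z : A) : Commute (J + i) z := (hJc z).add_left (hic z)
  have hpp : p * p = p := hp ▸ mul_star_mul_mul_star_of_mul_self_eq_zero hbb hb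
  have hpb : p * star b = 0 := by rw [hp, mul_assoc, ← star_mul, hbb, star_zero, mul_zero]
  have hw2 : (J + i) * (J + i) * (1 + Complex.I • J) = 0 := by
    have hJJ : J * J = -1 := hJ ▸ hi ▸ star_I_smul_one_mul_self
    simp only [hi, add_mul, mul_add, smul_mul_assoc, mul_smul_comm, one_mul, mul_one, hJJ,
      neg_mul, smul_neg]
    match_scalars <;> ring_nf <;> simp [Complex.I_sq]
  have hx : star (p + i * star b) * (p + i * star b) = (1 + Complex.I • J) * p := by
    rw [star_add, show star p = p by rw [hp, star_mul, star_star], star_mul, star_star, ← hJ,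
      ← (hJc b).eq, hi, smul_mul_assoc, one_mul]
    simp only [add_mul, mul_add, mul_smul_comm, smul_mul_assoc, mul_assoc, hpp, hpb,
      show b * p = 0 by rw [hp, ← mul_assoc, hbb, zero_mul], ← hp, mul_zero, zero_add, add_zero,
      one_mul]
  have hwx : (J + i) * (p + i * star b) = 0 := by
    have hsw : star (J + i) = J + i := by rw [star_add, hJ, star_star, add_comm]
    rw [← CStarRing.star_mul_self_eq_zero_iff, star_mul, hsw, mul_assoc, (hw _).symm.left_comm,
      (hw _).symm.left_comm, hx, ← mul_assoc, ← mul_assoc, hw2, zero_mul]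
  have hwp : (J + i) * p = 0 := by
    have hpx : p * (p + i * star b) = p := by
      rw [mul_add, hpp, ← mul_assoc, ← (hic p).eq, mul_assoc, hpb, mul_zero, add_zero]
    rw [← hpx, ← mul_assoc, (hw p).eq, mul_assoc, hwx, mul_zero]
  exact eq_neg_of_add_eq_zero_left
    (eq_zero_of_forall_commute_of_mul_mul_star_eq_zero hbb hb hw (hp ▸ hwp))

theorem starModule_of_star_I_smul_one (h : star (Complex.I • (1 : A)) = -(Complex.I • (1 : A))) :
    StarModule ℂ A := by
  have hreal (r : ℝ) (y : A) : star (r • y) = r • star y :=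
    map_real_smul (starAddEquiv : A ≃+ A) continuous_star r y
  have hI (y : A) : star (Complex.I • y) = -(Complex.I • star y) := by
    rw [show Complex.I • y = Complex.I • (1 : A) * y by rw [smul_mul_assoc, one_mul], star_mul, h,
      mul_neg, mul_smul_comm, mul_one]
  refine ⟨fun c y => ?_⟩
  rw [← Complex.re_add_im c]
  simp only [Complex.star_def, map_mul, Complex.conj_ofReal, Complex.conj_I, mul_neg,
    add_smul, neg_smul, ← smul_smul, Complex.coe_smul, star_add, hreal, hI,
    smul_comm _ Complex.I]

end StarModule

section CStarEstimates

variable {A : Type*} [NormedRing A] [StarRing A] [CStarRing A]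

theorem CStarRing.norm_one_le : ‖(1 : A)‖ ≤ 1 := by
  rcases subsingleton_or_nontrivial A with _ | _
  · simp [Subsingleton.elim (1 : A) 0]
  · exact CStarRing.norm_one.le

variable [NormedAlgebra ℂ A] [StarModule ℂ A]

/-- A first-order step along the flow `y ↦ i[D, y]` grows the norm only to second order, because
`1 + h i D` is unitary up to `O(h²)`. -/
theorem norm_add_smul_I_commutator_le {D : A} (hD : IsSelfAdjoint D) (y : A) (h : ℝ) :
    ‖y + h • (Complex.I • (D * y - y * D))‖ ≤ (1 + 2 * h ^ 2 * ‖D‖ ^ 2) * ‖y‖ := by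
  set u : A := 1 + ((h : ℂ) * Complex.I) • D
  have hc : star ((h : ℂ) * Complex.I) = -((h : ℂ) * Complex.I) := by simp
  have hsu : star u = 1 - ((h : ℂ) * Complex.I) • D := by
    rw [star_add, star_one, star_smul, hc, hD.star_eq, neg_smul, sub_eq_add_neg]
  have hid : y + h • (Complex.I • (D * y - y * D))
      = u * y * star u - (h ^ 2 : ℝ) • (D * y * D) := by
    rw [hsu, ← Complex.coe_smul, ← Complex.coe_smul, smul_smul]
    simp only [u, add_mul, mul_sub, one_mul, mul_one, smul_mul_assoc, mul_smul_comm, mul_assoc]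
    match_scalars <;> ring_nf; simp [Complex.I_sq]
  have hu : ‖u‖ * ‖u‖ ≤ 1 + h ^ 2 * ‖D‖ ^ 2 := by
    have hsuu : star u * u = 1 + (h ^ 2 : ℝ) • (D * D) := by
      rw [hsu, ← Complex.coe_smul]
      simp only [u, mul_add, sub_mul, one_mul, mul_one, smul_mul_assoc, mul_smul_comm]
      match_scalars <;> ring_nf; simp [Complex.I_sq]
    rw [← CStarRing.norm_star_mul_self, hsuu]
    calc ‖1 + (h ^ 2 : ℝ) • (D * D)‖ ≤ ‖(1 : A)‖ + h ^ 2 * (‖D‖ * ‖D‖) := by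
          refine (norm_add_le _ _).trans (add_le_add le_rfl ?_)
          rw [norm_smul, Real.norm_of_nonneg (sq_nonneg h)]
          exact mul_le_mul_of_nonneg_left (norm_mul_le _ _) (sq_nonneg h)
      _ ≤ 1 + h ^ 2 * ‖D‖ ^ 2 := by rw [← sq]; linarith [CStarRing.norm_one_le (A := A)]
  calc ‖y + h • (Complex.I • (D * y - y * D))‖
      ≤ ‖u‖ * ‖y‖ * ‖star u‖ + h ^ 2 * (‖D‖ * ‖y‖ * ‖D‖) := by
        rw [hid]
        refine (norm_sub_le _ _).trans (add_le_add ?_ ?_)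
        · exact (norm_mul_le _ _).trans (mul_le_mul_of_nonneg_right (norm_mul_le _ _)
            (norm_nonneg _))
        · rw [norm_smul, Real.norm_of_nonneg (sq_nonneg h)]
          exact mul_le_mul_of_nonneg_left ((norm_mul_le _ _).trans
            (mul_le_mul_of_nonneg_right (norm_mul_le _ _) (norm_nonneg _))) (sq_nonneg h)
    _ = ‖u‖ * ‖u‖ * ‖y‖ + h ^ 2 * ‖D‖ ^ 2 * ‖y‖ := by rw [norm_star]; ring
    _ ≤ (1 + h ^ 2 * ‖D‖ ^ 2) * ‖y‖ + h ^ 2 * ‖D‖ ^ 2 * ‖y‖ := by gcongr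
    _ = (1 + 2 * h ^ 2 * ‖D‖ ^ 2) * ‖y‖ := by ring

end CStarEstimates

section NormGrowth

open Filter Topology Set

variable {A : Type*} [NormedRing A] [StarRing A] [CStarRing A] [NormedAlgebra ℂ A]
  [StarModule ℂ A]

theorem eventually_slope_norm_lt {f : ℝ → A} {D R : A} {x ρ : ℝ}
    (hf : HasDerivWithinAt f (Complex.I • (D * f x - f x * D) + R) (Ioi x) x)
    (hD : IsSelfAdjoint D) (hρ : ‖R‖ < ρ) :
    ∀ᶠ z in 𝓝[>] x, slope (fun r => ‖f r‖) x z < ρ := by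
  set F := Complex.I • (D * f x - f x * D) + R
  set ψ : ℝ → ℝ := fun z => 2 * (z - x) * ‖D‖ ^ 2 * ‖f x‖ + ‖R‖ + ‖slope f x z - F‖
  have hslope : Tendsto (slope f x) (𝓝[>] x) (𝓝 F) :=
    (hasDerivWithinAt_iff_tendsto_slope' (lt_irrefl x)).mp hf
  have hψ : Tendsto ψ (𝓝[>] x) (𝓝 ‖R‖) := by
    have h1 : Tendsto (fun z : ℝ => 2 * (z - x) * ‖D‖ ^ 2 * ‖f x‖) (𝓝[>] x) (𝓝 0) := by
      have : Continuous fun z : ℝ => 2 * (z - x) * ‖D‖ ^ 2 * ‖f x‖ := by fun_prop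
      simpa using (this.tendsto x).mono_left nhdsWithin_le_nhds
    have h2 : Tendsto (fun z => ‖slope f x z - F‖) (𝓝[>] x) (𝓝 0) := by
      simpa using (hslope.sub_const F).norm
    simpa using (h1.add_const ‖R‖).add h2
  filter_upwards [hψ.eventually (gt_mem_nhds hρ), self_mem_nhdsWithin] with z hzρ hxz
  have hpos : 0 < z - x := sub_pos.mpr hxz
  refine lt_of_le_of_lt ?_ hzρ
  have hdecomp : f z = (f x + (z - x) • (Complex.I • (D * f x - f x * D))) + (z - x) • R
      + (z - x) • (slope f x z - F) := by
    rw [smul_sub (z - x) (slope f x z) F, sub_smul_slope, vsub_eq_sub]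
    simp only [F, smul_add]
    abel
  rw [slope_def_field, div_le_iff₀ hpos]
  have hstep := norm_add_smul_I_commutator_le hD (f x) (z - x)
  calc ‖f z‖ - ‖f x‖
      ≤ (1 + 2 * (z - x) ^ 2 * ‖D‖ ^ 2) * ‖f x‖ + (z - x) * ‖R‖
          + (z - x) * ‖slope f x z - F‖ - ‖f x‖ := by
        rw [hdecomp]
        gcongr
        refine (norm_add_le _ _).trans
          (add_le_add ((norm_add_le _ _).trans (add_le_add hstep ?_)) ?_)
        all_goals rw [norm_smul, Real.norm_of_nonneg hpos.le]
    _ = ψ z * (z - x) := by ring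

theorem norm_le_add_integral_of_hasDerivWithinAt {f D R : ℝ → A} {g : ℝ → ℝ} {s t : ℝ}
    (hst : s ≤ t)
    (hf : ∀ r ∈ Icc s t,
      HasDerivWithinAt f (Complex.I • (D r * f r - f r * D r) + R r) (Icc s t) r)
    (hD : ∀ r ∈ Icc s t, IsSelfAdjoint (D r)) (hR : ∀ r ∈ Icc s t, ‖R r‖ ≤ g r)
    (hg : ContinuousOn g (Icc s t)) :
    ‖f t‖ ≤ ‖f s‖ + ∫ r in s..t, g r := by
  -- extend `g` continuously to `ℝ` so that `∫ g` is differentiable everywhere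
  set g' : ℝ → ℝ := fun r => g (projIcc s t hst r)
  have hg' : Continuous g' :=
    hg.comp_continuous (continuous_subtype_val.comp continuous_projIcc) fun r =>
      (projIcc s t hst r).2
  have hg'g : EqOn g' g (Icc s t) := fun r hr => by simp only [g', projIcc_of_mem hst hr]
  have hB (x : ℝ) : HasDerivAt (fun r => ‖f s‖ + ∫ τ in s..r, g' τ) (g' x) x :=
    (hg'.integral_hasStrictDerivAt s x).hasDerivAt.const_add _
  have hbound := image_le_of_liminf_slope_right_le_deriv_boundary (f := fun r => ‖f r‖)
    (fun r hr => (hf r hr).continuousWithinAt.norm) (by simp)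
    (fun x _ => (hB x).continuousAt.continuousWithinAt) (fun x _ => (hB x).hasDerivWithinAt)
    (fun x hx ρ hρ => (eventually_slope_norm_lt
      ((hf x (Ico_subset_Icc_self hx)).mono_of_mem_nhdsWithin (Icc_mem_nhdsGT_of_mem hx))
      (hD x (Ico_subset_Icc_self hx))
      ((hR x (Ico_subset_Icc_self hx)).trans_lt (hg'g (Ico_subset_Icc_self hx) ▸ hρ))).frequently)
    (right_mem_Icc.mpr hst)
  rwa [intervalIntegral.integral_congr (hg'g.mono (uIcc_of_le hst).subset)] at hbound

end NormGrowth

section InteractionPicture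

variable {A : Type*} [NormedRing A] [StarRing A] [NormedAlgebra ℂ A] [StarModule ℂ A]
  [ContinuousStar A] {S : Set ℝ} {r : ℝ} {U : ℝ → A} {H : A}

theorem hasDerivWithinAt_star_of_propagator
    (hU : HasDerivWithinAt U (-Complex.I • (H * U r)) S r) (hH : IsSelfAdjoint H) :
    HasDerivWithinAt (fun r => star (U r)) (Complex.I • (star (U r) * H)) S r := by
  simpa [star_smul, hH.star_eq] using hU.star

theorem hasDerivWithinAt_star_mul_mul_of_propagator
    (hU : HasDerivWithinAt U (-Complex.I • (H * U r)) S r) (hH : IsSelfAdjoint H)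
    {Y : ℝ → A} {Y' : A} (hY : HasDerivWithinAt Y Y' S r) :
    HasDerivWithinAt (fun r => star (U r) * Y r * U r)
      (star (U r) * (Y' + Complex.I • (H * Y r - Y r * H)) * U r) S r := by
  refine (((hasDerivWithinAt_star_of_propagator hU hH).mul hY).mul hU).congr_deriv ?_
  simp only [Pi.mul_apply, mul_add, add_mul, mul_sub, sub_mul, smul_mul_assoc, mul_smul_comm,
    neg_smul, mul_neg, smul_sub, mul_assoc]
  abel

theorem hasDerivWithinAt_mul_mul_star_of_propagator
    (hU : HasDerivWithinAt U (-Complex.I • (H * U r)) S r) (hH : IsSelfAdjoint H) (C : A) :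
    HasDerivWithinAt (fun r => U r * C * star (U r))
      (-Complex.I • (H * (U r * C * star (U r)) - U r * C * star (U r) * H)) S r := by
  refine ((hU.mul_const C).mul (hasDerivWithinAt_star_of_propagator hU hH)).congr_deriv ?_
  simp only [smul_mul_assoc, mul_smul_comm, neg_smul, neg_mul, smul_sub, mul_assoc]
  abel

theorem hasDerivWithinAt_interactionPicture {V : ℝ → A} {K F R : A} (C : A)
    (hU : HasDerivWithinAt U (-Complex.I • (H * U r)) S r) (hH : IsSelfAdjoint H)
    (hV : HasDerivWithinAt V (-Complex.I • (K * V r)) S r) (hK : IsSelfAdjoint K)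
    (hUu : U r * star (U r) = 1) (hHK : H = K + F + R) (hR : Commute R (V r * C * star (V r))) :
    HasDerivWithinAt (fun r => star (U r) * (V r * C * star (V r)) * U r)
      (Complex.I • (star (U r) * F * U r * (star (U r) * (V r * C * star (V r)) * U r)
        - star (U r) * (V r * C * star (V r)) * U r * (star (U r) * F * U r))) S r := by
  refine (hasDerivWithinAt_star_mul_mul_of_propagator hU hH
    (hasDerivWithinAt_mul_mul_star_of_propagator hV hK C)).congr_deriv ?_
  generalize V r * C * star (V r) = Y at hR ⊢
  have hUU (z : A) : U r * (star (U r) * z) = z := by rw [← mul_assoc, hUu, one_mul]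
  subst hHK
  simp only [mul_add, add_mul, mul_sub, sub_mul, smul_mul_assoc, mul_smul_comm, smul_add,
    smul_sub, neg_smul, mul_neg, neg_mul, mul_assoc, hUU, hR.eq]
  abel

end InteractionPicture
section Estimate

open Set

variable {A : Type*} [NormedRing A] [StarRing A] [CStarRing A]

theorem norm_star_mul_mul_of_mem_unitary {U : A} (hU : U ∈ unitary A) (Y : A) :
    ‖star U * Y * U‖ = ‖Y‖ := by
  rw [CStarRing.norm_mul_mem_unitary _ hU, CStarRing.norm_mem_unitary_mul _ (Unitary.star_mem hU)]

variable [NormedAlgebra ℂ A] [StarModule ℂ A]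

theorem norm_anticommutator_interactionPicture_le {ι : Type*} (T : Finset ι) (Φ : ι → ℝ → A)
    {U V H K R : ℝ → A} (C B : A) {I : Set ℝ} {s t : ℝ} (hst : s ≤ t) (hI : Icc s t ⊆ I)
    (hU : ∀ r ∈ I, HasDerivWithinAt U (-Complex.I • (H r * U r)) I r)
    (hV : ∀ r ∈ I, HasDerivWithinAt V (-Complex.I • (K r * V r)) I r)
    (hUu : ∀ r ∈ I, U r ∈ unitary A) (hVu : ∀ r ∈ I, V r ∈ unitary A)
    (hH : ∀ r ∈ I, IsSelfAdjoint (H r)) (hK : ∀ r ∈ I, IsSelfAdjoint (K r))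
    (hΦ : ∀ Z ∈ T, ∀ r ∈ I, IsSelfAdjoint (Φ Z r)) (hΦc : ∀ Z ∈ T, ContinuousOn (Φ Z) I)
    (hHK : ∀ r ∈ I, H r = K r + ∑ Z ∈ T, Φ Z r + R r)
    (hR : ∀ r ∈ I, Commute (R r) (V r * C * star (V r))) :
    ‖star (U t) * (V t * C * star (V t)) * U t * B
        + B * (star (U t) * (V t * C * star (V t)) * U t)‖
      ≤ ‖star (U s) * (V s * C * star (V s)) * U s * B
          + B * (star (U s) * (V s * C * star (V s)) * U s)‖
        + 2 * ‖C‖ * ∑ Z ∈ T, ∫ r in s..t,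
          ‖star (U r) * Φ Z r * U r * B - B * (star (U r) * Φ Z r * U r)‖ := by
  set D : ℝ → A := fun r => star (U r) * (∑ Z ∈ T, Φ Z r) * U r
  set G : ℝ → A := fun r => star (U r) * (V r * C * star (V r)) * U r
  set c : ℝ → ι → ℝ := fun r Z => ‖star (U r) * Φ Z r * U r * B - B * (star (U r) * Φ Z r * U r)‖
  have hf (r : ℝ) (hr : r ∈ Icc s t) : HasDerivWithinAt (fun r => G r * B + B * G r)
      (Complex.I • (D r * (G r * B + B * G r) - (G r * B + B * G r) * D r)
        + -(Complex.I • (G r * (D r * B - B * D r) + (D r * B - B * D r) * G r))) (Icc s t) r := by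
    replace hr := hI hr
    have hG := (hasDerivWithinAt_interactionPicture C (hU r hr) (hH r hr) (hV r hr) (hK r hr)
      (Unitary.mul_star_self_of_mem (hUu r hr)) (hHK r hr) (hR r hr)).mono hI
    exact ((hG.mul_const B).add (hG.const_mul B)).congr_deriv (anticommutator_I_commutator _ _ _)
  have hD (r : ℝ) (hr : r ∈ Icc s t) : IsSelfAdjoint (D r) :=
    (isSelfAdjoint_sum T fun Z hZ => hΦ Z hZ r (hI hr)).conjugate' (U r)
  have hremainder (r : ℝ) (hr : r ∈ Icc s t) :
      ‖-(Complex.I • (G r * (D r * B - B * D r) + (D r * B - B * D r) * G r))‖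
        ≤ 2 * ‖C‖ * ∑ Z ∈ T, c r Z := by
    have hGn : ‖G r‖ = ‖C‖ := by
      simp only [G, norm_star_mul_mul_of_mem_unitary (hUu r (hI hr))]
      simpa using norm_star_mul_mul_of_mem_unitary (Unitary.star_mem (hVu r (hI hr))) C
    have hDB : D r * B - B * D r
        = ∑ Z ∈ T, (star (U r) * Φ Z r * U r * B - B * (star (U r) * Φ Z r * U r)) := by
      simp only [D, Finset.mul_sum, Finset.sum_mul, Finset.sum_sub_distrib]
    rw [norm_neg, norm_smul, Complex.norm_I, one_mul, ← hGn]
    refine (norm_anticommutator_le _ _).trans (mul_le_mul_of_nonneg_left ?_ (by positivity))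
    rw [hDB]
    exact norm_sum_le _ _
  have hUc : ContinuousOn U (Icc s t) := fun r hr => ((hU r (hI hr)).mono hI).continuousWithinAt
  have hc (Z : ι) (hZ : Z ∈ T) : ContinuousOn (fun r => c r Z) (Icc s t) := by
    have h := (hUc.star.mul ((hΦc Z hZ).mono hI)).mul hUc
    exact ((h.mul continuousOn_const).sub (continuousOn_const.mul h)).norm
  have hint := norm_le_add_integral_of_hasDerivWithinAt hst hf hD hremainder
    (continuousOn_const.mul (continuousOn_finsetSum T hc))
  rwa [intervalIntegral.integral_const_mul, intervalIntegral.integral_finsetSum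
    fun Z hZ => ((hc Z hZ).mono (uIcc_of_le hst).subset).intervalIntegrable] at hint

end Estimate
open MeasureTheory in
theorem one_step_locality_anticommutator_general
    {Γ A : Type*} [DecidableEq Γ]
    [NormedRing A] [StarRing A] [CStarRing A] [NormedAlgebra ℂ A]
    (a : Γ → A) (hCAR : IsCAR a)
    -- the interval `I`
    (I : Set ℝ) (hI : I.OrdConnected)
    -- the even, time-dependent interaction `Φ`
    (Φ : Finset Γ → ℝ → A)
    (hΦsa : ∀ Z : Finset Γ, ∀ t ∈ I, star (Φ Z t) = Φ Z t)
    (hΦeven : ∀ Z : Finset Γ, ∀ t ∈ I, Φ Z t ∈ carSpanEven a Z)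
    (hΦcont : ∀ Z : Finset Γ, ContinuousOn (Φ Z) I)
    -- the finite volume `Λ` and the sub-volume `X ⊆ Λ`
    (Λ X : Finset Γ) (hXΛ : X ⊆ Λ)
    -- the unitary propagator `U_Λ(t,s)` generated by `H_Λ(t) = ∑_{Z ⊆ Λ} Φ(Z,t)`
    (U : ℝ → ℝ → A)
    (hUunitary : ∀ s ∈ I, ∀ t ∈ I, U t s ∈ unitary A)
    (hUmem : ∀ s ∈ I, ∀ t ∈ I, U t s ∈ carSpan a Λ)
    (hUinit : ∀ s ∈ I, U s s = 1)
    (hUode : ∀ s ∈ I, ∀ t ∈ I,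
      HasDerivWithinAt (fun r => U r s)
        ((-Complex.I) • ((∑ Z ∈ Λ.powerset, Φ Z t) * U t s)) I t)
    -- the unitary propagator `U_X(t,s)` generated by `H_X(t) = ∑_{Z ⊆ X} Φ(Z,t)`
    (V : ℝ → ℝ → A)
    (hVunitary : ∀ s ∈ I, ∀ t ∈ I, V t s ∈ unitary A)
    (hVmem : ∀ s ∈ I, ∀ t ∈ I, V t s ∈ carSpan a X)
    (hVinit : ∀ s ∈ I, V s s = 1)
    (hVode : ∀ s ∈ I, ∀ t ∈ I,
      HasDerivWithinAt (fun r => V r s)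
        ((-Complex.I) • ((∑ Z ∈ X.powerset, Φ Z t) * V t s)) I t)
    -- the observables `A₀ ∈ 𝔄_X` and `B₀ ∈ 𝔄_Λ`
    (A₀ B₀ : A) (hA : A₀ ∈ carSpan a X)
    (s t : ℝ) (hs : s ∈ I) (ht : t ∈ I) (hst : s ≤ t) :
    ‖(star (U t s) * A₀ * U t s) * B₀ + B₀ * (star (U t s) * A₀ * U t s)‖ ≤
      ‖(star (V t s) * A₀ * V t s) * B₀ + B₀ * (star (V t s) * A₀ * V t s)‖ +
      2 * ‖A₀‖ *
        ∑ Z ∈ Λ.powerset.filter (fun Z => (Z ∩ X).Nonempty ∧ (Z \ X).Nonempty),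
          ∫ r in s..t,
            ‖(star (U r s) * Φ Z r * U r s) * B₀ - B₀ * (star (U r s) * Φ Z r * U r s)‖ := by
  rcases isEmpty_or_nonempty Γ with hΓ | ⟨⟨x₀⟩⟩
  · -- no CAR pair to make `star` conjugate-linear, but then all propagators are scalars
    rw [star_mul_mul_eq_self_of_mem_carSpan (hUunitary s hs t ht) (hUmem s hs t ht),
      star_mul_mul_eq_self_of_mem_carSpan (hVunitary s hs t ht) (hVmem s hs t ht)]
    exact le_add_of_nonneg_right (mul_nonneg (by positivity) (Finset.sum_nonneg fun Z _ =>
      intervalIntegral.integral_nonneg hst fun r _ => norm_nonneg _))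
  have := starModule_of_star_I_smul_one (star_I_smul_one_of_mul_self_eq_zero
    (hCAR.mul_self_eq_zero x₀) (hCAR.mul_star_add_star_mul x₀))
  set R : ℝ → A := fun r =>
    ∑ Z ∈ Λ.powerset.filter (fun Z => ¬(Z ∩ X).Nonempty ∧ (Z \ X).Nonempty), Φ Z r
  have hR (r : ℝ) (hr : r ∈ I) {y : A} (hy : y ∈ carSpan a X) : Commute (R r) y :=
    Commute.sum_left _ _ _ fun Z hZ => hCAR.commute_of_disjoint
      (Finset.disjoint_iff_inter_eq_empty.mpr
        (Finset.not_nonempty_iff_eq_empty.mp (Finset.mem_filter.mp hZ).2.1)) (hΦeven Z r hr) hy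
  have hRsa (r : ℝ) (hr : r ∈ I) : IsSelfAdjoint (R r) := isSelfAdjoint_sum _ fun Z _ => hΦsa Z r hr
  have hHsa (Y : Finset Γ) (r : ℝ) (hr : r ∈ I) : IsSelfAdjoint (∑ Z ∈ Y.powerset, Φ Z r) :=
    isSelfAdjoint_sum _ fun Z _ => hΦsa Z r hr
  have key := norm_anticommutator_interactionPicture_le _ Φ (R := R) (star (V t s) * A₀ * V t s) B₀
    hst (hI.out hs ht) (hUode s hs) (hVode s hs) (hUunitary s hs) (hVunitary s hs) (hHsa Λ)
    (hHsa X) (fun Z _ => hΦsa Z) (fun Z _ => hΦcont Z)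
    (fun r _ => Finset.sum_powerset_eq_add_add hXΛ _) fun r hr =>
      (hR r hr (hVmem s hs r hr)).mul_mul_star_of_isSelfAdjoint (hRsa r hr)
        ((hR r hr (hVmem s hs t ht)).star_mul_mul_of_isSelfAdjoint (hRsa r hr) (hR r hr hA))
  have hVV : V t s * (star (V t s) * A₀ * V t s) * star (V t s) = A₀ := by
    have hVt := Unitary.mul_star_self_of_mem (hVunitary s hs t ht)
    rw [← mul_assoc, ← mul_assoc, hVt, one_mul, mul_assoc, hVt, mul_one]
  rwa [hVV, hUinit s hs, hVinit s hs, star_one, one_mul, mul_one, one_mul, mul_one,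
    norm_star_mul_mul_of_mem_unitary (hVunitary s hs t ht)] at key

open MeasureTheory in
/-- one-step locality estimate, anticommutator version. -/
theorem one_step_locality_anticommutator
    {Γ A : Type*} [Countable Γ] [DecidableEq Γ]
    [NormedRing A] [StarRing A] [CStarRing A] [NormedAlgebra ℂ A] [CompleteSpace A]
    (a : Γ → A) (hCAR : IsCAR a)
    -- the interval `I`
    (I : Set ℝ) (hI : I.OrdConnected)
    -- the even, time-dependent interaction `Φ`
    (Φ : Finset Γ → ℝ → A)
    (hΦsa : ∀ Z : Finset Γ, ∀ t ∈ I, star (Φ Z t) = Φ Z t)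
    (hΦeven : ∀ Z : Finset Γ, ∀ t ∈ I, Φ Z t ∈ carSpanEven a Z)
    (hΦcont : ∀ Z : Finset Γ, ContinuousOn (Φ Z) I)
    -- the finite volume `Λ` and the sub-volume `X ⊆ Λ`
    (Λ X : Finset Γ) (hXΛ : X ⊆ Λ)
    -- the unitary propagator `U_Λ(t,s)` generated by `H_Λ(t) = ∑_{Z ⊆ Λ} Φ(Z,t)`
    (U : ℝ → ℝ → A)
    (hUunitary : ∀ s ∈ I, ∀ t ∈ I, U t s ∈ unitary A)
    (hUmem : ∀ s ∈ I, ∀ t ∈ I, U t s ∈ carSpan a Λ)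
    (hUinit : ∀ s ∈ I, U s s = 1)
    (hUode : ∀ s ∈ I, ∀ t ∈ I,
      HasDerivWithinAt (fun r => U r s)
        ((-Complex.I) • ((∑ Z ∈ Λ.powerset, Φ Z t) * U t s)) I t)
    -- the unitary propagator `U_X(t,s)` generated by `H_X(t) = ∑_{Z ⊆ X} Φ(Z,t)`
    (V : ℝ → ℝ → A)
    (hVunitary : ∀ s ∈ I, ∀ t ∈ I, V t s ∈ unitary A)
    (hVmem : ∀ s ∈ I, ∀ t ∈ I, V t s ∈ carSpan a X)
    (hVinit : ∀ s ∈ I, V s s = 1)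
    (hVode : ∀ s ∈ I, ∀ t ∈ I,
      HasDerivWithinAt (fun r => V r s)
        ((-Complex.I) • ((∑ Z ∈ X.powerset, Φ Z t) * V t s)) I t)
    -- the observables `A₀ ∈ 𝔄_X` and `B₀ ∈ 𝔄_Λ`
    (A₀ B₀ : A) (hA : A₀ ∈ carSpan a X) (hB : B₀ ∈ carSpan a Λ)
    (s t : ℝ) (hs : s ∈ I) (ht : t ∈ I) (hst : s ≤ t) :
    ‖(star (U t s) * A₀ * U t s) * B₀ + B₀ * (star (U t s) * A₀ * U t s)‖ ≤
      ‖(star (V t s) * A₀ * V t s) * B₀ + B₀ * (star (V t s) * A₀ * V t s)‖ +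
      2 * ‖A₀‖ *
        ∑ Z ∈ Λ.powerset.filter (fun Z => (Z ∩ X).Nonempty ∧ (Z \ X).Nonempty),
          ∫ r in s..t,
            ‖(star (U r s) * Φ Z r * U r s) * B₀ - B₀ * (star (U r s) * Φ Z r * U r s)‖ :=
  one_step_locality_anticommutator_general a hCAR I hI Φ hΦsa hΦeven hΦcont Λ X hXΛ U hUunitary
    hUmem hUinit hUode V hVunitary hVmem hVinit hVode A₀ B₀ hA s t hs ht hst
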